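/- If (X,S) is an infinite minimal subshift with exactly one asymptotic component, then Aut(X,S) is isomorphic to ℤ. -/

import Mathlib

/-!
An automorphism `φ` is continuous on a compact subshift, so `(φ x)₀` depends on finitely many
coordinates of `x`; being shift-commuting, `φ` therefore preserves left asymptoticity, and maps an
asymptotic component onto an asymptotic component. As there is only one, `φ x` lies in the
orbit-asymptotic class of `x`, so after composing with a power of the shift some `ψ` satisfies
`ψ z ∼ z`. The sequences `S⁻ᵏ z` and `ψ (S⁻ᵏ z) = S⁻ᵏ (ψ z)` eventually agree on every
coordinate, so `ψ w = w` at any cluster point `w` of `S⁻ᵏ z`; by minimality the orbit of `w` is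
dense, whence `ψ = id`. Thus `Aut(X, S)` is generated by `S`, which has infinite order as `X` is infinite.
-/

open Filter Topology MeasureTheory

namespace AsympSOE

/-! ### Subshift basics -/

/-- Shift of a bi-infinite sequence by `n` (the `n`-th power of the left shift `S`). -/
def SShift {A : Type*} (n : ℤ) (x : ℤ → A) : ℤ → A := fun i => x (i + n)

/-- Two bi-infinite sequences are (left) asymptotic: they agree on a left half-line. -/
def SAsymp {A : Type*} (x y : ℤ → A) : Prop := ∃ ℓ : ℤ, ∀ i < ℓ, x i = y i

/-- `y` belongs to the shift-orbit of `x`. -/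
def SSameOrbit {A : Type*} (x y : ℤ → A) : Prop := ∃ n : ℤ, SShift n x = y

/-- The shift-orbits of `x` and `y` are asymptotic. -/
def SOrbAsymp {A : Type*} (x y : ℤ → A) : Prop :=
  ∃ n n' : ℤ, SAsymp (SShift n x) (SShift n' y)

/-- `C` is an asymptotic component of the subshift `X`: it is the `SOrbAsymp`-class of
some `x ∈ X` and contains at least two distinct orbits. -/
def SIsAsymComponent {A : Type*} (X : Set (ℤ → A)) (C : Set (ℤ → A)) : Prop :=
  ∃ x ∈ X, C = {y ∈ X | SOrbAsymp x y} ∧ ∃ y ∈ X, SOrbAsymp x y ∧ ¬ SSameOrbit x y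

/-- A subshift: a nonempty closed shift-invariant set of bi-infinite sequences. -/
def IsSubshift {A : Type*} [TopologicalSpace A] (X : Set (ℤ → A)) : Prop :=
  X.Nonempty ∧ IsClosed X ∧ (∀ x ∈ X, SShift 1 x ∈ X) ∧ (∀ x ∈ X, SShift (-1) x ∈ X)

/-- A minimal subshift: every orbit is dense. -/
def IsMinimalSubshift {A : Type*} [TopologicalSpace A] (X : Set (ℤ → A)) : Prop :=
  IsSubshift X ∧ ∀ x ∈ X, ∀ y ∈ X, y ∈ closure {z | SSameOrbit x z}

/-- The words of length `n` appearing in points of `X`. -/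
def langOf {A : Type*} (X : Set (ℤ → A)) (n : ℕ) : Set (List A) :=
  {w | ∃ x ∈ X, ∃ a : ℤ, (List.range n).map (fun t => x (a + t)) = w}

/-- The complexity function of a subshift. -/
noncomputable def complexityOf {A : Type*} (X : Set (ℤ → A)) (n : ℕ) : ℕ :=
  (langOf X n).ncard

/-- A Toeplitz sequence. -/
def IsToeplitzSeq {A : Type*} (x : ℤ → A) : Prop :=
  ∀ n : ℤ, ∃ p : ℕ, 0 < p ∧ ∀ k : ℤ, x (n + k * p) = x n

/-- A Toeplitz subshift: the shift-orbit closure of a Toeplitz sequence. -/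
def IsToeplitzSubshift {A : Type*} [TopologicalSpace A] (X : Set (ℤ → A)) : Prop :=
  ∃ x : ℤ → A, IsToeplitzSeq x ∧ X = closure {z | SSameOrbit x z}

/-! ### General topological dynamical systems -/

/-- The (full) orbit of `x` under the invertible map `T`. -/
def orbitEq {X : Type*} (T : Equiv.Perm X) (x : X) : Set X := {y | ∃ n : ℤ, (T ^ n) x = y}

/-- `x` and `y` are (left) asymptotic for `T`: `dist (T⁻ⁿ x) (T⁻ⁿ y) → 0` as `n → ∞`. -/
def MAsymp {X : Type*} [MetricSpace X] (T : Equiv.Perm X) (x y : X) : Prop :=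
  Tendsto (fun n : ℕ => dist ((T ^ (-(n : ℤ))) x) ((T ^ (-(n : ℤ))) y)) atTop (𝓝 0)

/-- The orbits of `x` and `y` are asymptotic. -/
def MOrbAsymp {X : Type*} [MetricSpace X] (T : Equiv.Perm X) (x y : X) : Prop :=
  ∃ n n' : ℤ, MAsymp T ((T ^ n) x) ((T ^ n') y)

/-- `C` is an asymptotic component of the system `(X, T)`: the `MOrbAsymp`-class of some
point `x`, containing at least two distinct orbits. -/
def MIsAsymComponent {X : Type*} [MetricSpace X] (T : Equiv.Perm X) (C : Set X) : Prop :=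
  ∃ x, C = {y | MOrbAsymp T x y} ∧ ∃ y, MOrbAsymp T x y ∧ y ∉ orbitEq T x

/-- A minimal Cantor system: the compact metric space `X` is a Cantor space (nonempty,
totally disconnected, without isolated points) and every `T`-orbit is dense. -/
def IsMinimalCantor {X : Type*} [MetricSpace X] (T : X ≃ₜ X) : Prop :=
  CompactSpace X ∧ TotallyDisconnectedSpace X ∧ Nonempty X ∧
    (∀ x : X, Filter.NeBot (𝓝[≠] x)) ∧ ∀ x : X, Dense (orbitEq T.toEquiv x)

/-- Strong orbit equivalence of the systems `(X, T)` and `(Y, S)`: an orbit equivalence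
whose two orbit cocycles each have at most one point of discontinuity. -/
def IsSOE {X Y : Type*} [TopologicalSpace X] [TopologicalSpace Y]
    (T : X ≃ₜ X) (S : Y ≃ₜ Y) : Prop :=
  ∃ φ : X ≃ₜ Y,
    (∀ x : X, φ '' orbitEq T.toEquiv x = orbitEq S.toEquiv (φ x)) ∧
    ∃ α β : X → ℤ,
      (∀ x, φ (T x) = (S.toEquiv ^ α x) (φ x)) ∧
      (∀ x, φ ((T.toEquiv ^ β x) x) = S (φ x)) ∧
      {x | ¬ContinuousAt α x}.Subsingleton ∧
      {x | ¬ContinuousAt β x}.Subsingleton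

/-- The automorphism group of a system `(Y, S)`, as a subgroup of the permutation group:
the bi-continuous bijections commuting with `S`. -/
def autGroup {Y : Type*} [TopologicalSpace Y] (S : Y ≃ₜ Y) : Subgroup (Equiv.Perm Y) where
  carrier := {φ | Continuous φ ∧ Continuous φ.symm ∧ ∀ y, φ (S y) = S (φ y)}
  one_mem' := ⟨continuous_id, continuous_id, fun _ => rfl⟩
  mul_mem' := by
    rintro a b ⟨ha1, ha2, ha3⟩ ⟨hb1, hb2, hb3⟩
    refine ⟨ha1.comp hb1, hb2.comp ha2, fun y => ?_⟩
    simp only [Equiv.Perm.mul_apply, hb3, ha3]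
  inv_mem' := by
    rintro a ⟨ha1, ha2, ha3⟩
    refine ⟨by simpa using ha2, ha1, fun y => ?_⟩
    have h : a (S (a⁻¹ y)) = S y := by
      rw [ha3 (a⁻¹ y)]; simp
    calc a⁻¹ (S y) = a⁻¹ (a (S (a⁻¹ y))) := by rw [h]
    _ = S (a⁻¹ y) := by simp

section Shift

variable {A : Type*}

@[simp]
lemma sShift_apply (n : ℤ) (x : ℤ → A) (i : ℤ) : SShift n x i = x (i + n) := rfl

lemma sOrbAsymp_refl (x : ℤ → A) : SOrbAsymp x x := ⟨0, 0, 0, fun _ _ => rfl⟩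

end Shift

lemma exists_finset_forall_eq_of_continuous {ι A : Type*} [TopologicalSpace A]
    [DiscreteTopology A] {X : Set (ι → A)} (hX : IsCompact X) {f : X → A} (hf : Continuous f) :
    ∃ F : Finset ι, ∀ x y : X, (∀ i ∈ F, (x : ι → A) i = (y : ι → A) i) → f x = f y := by
  have := isCompact_iff_compactSpace.mp hX
  let K : Finset ι → Set (X × X) := fun F =>
    (⋂ i ∈ F, {p | (p.1 : ι → A) i = (p.2 : ι → A) i}) ∩ {p | f p.1 ≠ f p.2}
  have hclosed : ∀ F, IsClosed (K F) := fun F =>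
    (isClosed_biInter fun i _ => isClosed_eq
      ((continuous_apply i).comp (continuous_subtype_val.comp continuous_fst))
      ((continuous_apply i).comp (continuous_subtype_val.comp continuous_snd))).inter
    ((isClosed_discrete {q : A × A | q.1 ≠ q.2}).preimage
      (f := fun p : X × X => (f p.1, f p.2)) (by fun_prop))
  have hanti : Antitone K := fun F G hFG =>
    Set.inter_subset_inter_left _ (Set.biInter_subset_biInter_left hFG)
  have hempty : Set.univ ∩ ⋂ F, K F = ∅ := by
    refine Set.eq_empty_of_forall_notMem fun p ⟨_, hp⟩ => ?_
    have hK := Set.mem_iInter.mp hp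
    have hp12 : p.1 = p.2 := Subtype.ext (funext fun i => by simpa using (hK {i}).1)
    exact (hK ∅).2 (congrArg f hp12)
  obtain ⟨F, hF⟩ := isCompact_univ.elim_directed_family_closed K hclosed hempty hanti.directed_ge
  exact ⟨F, fun x y hxy => by_contra fun hne =>
    Set.eq_empty_iff_forall_notMem.mp hF (x, y) ⟨trivial, Set.mem_iInter₂.mpr hxy, hne⟩⟩

section Automorphisms

variable {A : Type*} [TopologicalSpace A] {X : Set (ℤ → A)} {S' : X ≃ₜ X}

lemma coe_zpow_apply (hS' : ∀ x : X, (S' x : ℤ → A) = SShift 1 x) (n : ℤ) (x : X) :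
    ((S'.toEquiv ^ n) x : ℤ → A) = SShift n x := by
  have hsymm : ∀ x : X, (S'.symm x : ℤ → A) = SShift (-1) x := fun x => by
    funext i
    simpa [sub_eq_add_neg] using (congrFun (hS' (S'.symm x)) (i - 1)).symm
  induction n using Int.induction_on generalizing x with
  | zero => funext i; simp
  | succ k ih =>
    rw [zpow_add_one, Equiv.Perm.mul_apply, ih]
    funext i
    simp [hS', add_assoc]
  | pred k ih =>
    rw [zpow_sub_one, Equiv.Perm.mul_apply, ih]
    funext i
    simp [hsymm, add_assoc, sub_eq_add_neg]

lemma toEquiv_mem_autGroup : S'.toEquiv ∈ autGroup S' :=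
  ⟨S'.continuous, S'.symm.continuous, fun _ => rfl⟩

lemma apply_zpow_of_mem_autGroup {φ : Equiv.Perm X} (hφ : φ ∈ autGroup S') (n : ℤ) (x : X) :
    φ ((S'.toEquiv ^ n) x) = (S'.toEquiv ^ n) (φ x) :=
  Equiv.congr_fun ((Commute.zpow_right (Equiv.ext hφ.2.2 : Commute φ S'.toEquiv) n).eq) x

lemma coe_apply_of_mem_autGroup (hS' : ∀ x : X, (S' x : ℤ → A) = SShift 1 x)
    {φ : Equiv.Perm X} (hφ : φ ∈ autGroup S') (x : X) (j : ℤ) :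
    (φ x : ℤ → A) j = (φ ((S'.toEquiv ^ j) x) : ℤ → A) 0 := by
  simp [apply_zpow_of_mem_autGroup hφ, coe_zpow_apply hS']

lemma IsMinimalSubshift.dense_range_zpow_apply (hmin : IsMinimalSubshift X)
    (hS' : ∀ x : X, (S' x : ℤ → A) = SShift 1 x) (x : X) :
    Dense (Set.range fun n : ℤ => (S'.toEquiv ^ n) x) := by
  intro y
  rw [closure_subtype, ← Set.range_comp]
  convert hmin.2 x x.2 y y.2 using 2
  ext z
  simp [SSameOrbit, coe_zpow_apply hS']

lemma eq_one_of_mem_autGroup_of_apply_eq [T2Space A] (hmin : IsMinimalSubshift X)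
    (hS' : ∀ x : X, (S' x : ℤ → A) = SShift 1 x) {ψ : Equiv.Perm X} (hψ : ψ ∈ autGroup S')
    {w : X} (hw : ψ w = w) : ψ = 1 := by
  have hψid : (ψ : X → X) = id := by
    refine Continuous.ext_on (hmin.dense_range_zpow_apply hS' w) hψ.1 continuous_id ?_
    rintro _ ⟨n, rfl⟩
    rw [apply_zpow_of_mem_autGroup hψ, hw, id]
  exact Equiv.ext (congrFun hψid)

lemma SAsymp.apply_of_mem_autGroup [DiscreteTopology A] (hX : IsCompact X)
    (hS' : ∀ x : X, (S' x : ℤ → A) = SShift 1 x) {φ : Equiv.Perm X} (hφ : φ ∈ autGroup S')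
    {x y : X} (h : SAsymp (x : ℤ → A) y) : SAsymp (φ x : ℤ → A) (φ y) := by
  obtain ⟨F, hF⟩ := exists_finset_forall_eq_of_continuous hX
    (f := fun x => (φ x : ℤ → A) 0) ((continuous_apply 0).comp (continuous_subtype_val.comp hφ.1))
  obtain ⟨r, hr⟩ := F.bddAbove
  obtain ⟨ℓ, hℓ⟩ := h
  refine ⟨ℓ - r, fun j hj => ?_⟩
  rw [coe_apply_of_mem_autGroup hS' hφ x j, coe_apply_of_mem_autGroup hS' hφ y j]
  refine hF _ _ fun i hi => ?_
  simp only [coe_zpow_apply hS', sShift_apply]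
  exact hℓ _ (by linarith [hr hi])

lemma SOrbAsymp.apply_of_mem_autGroup [DiscreteTopology A] (hX : IsCompact X)
    (hS' : ∀ x : X, (S' x : ℤ → A) = SShift 1 x) {φ : Equiv.Perm X} (hφ : φ ∈ autGroup S')
    {x y : X} (h : SOrbAsymp (x : ℤ → A) y) : SOrbAsymp (φ x : ℤ → A) (φ y) := by
  obtain ⟨n, n', hnn'⟩ := h
  refine ⟨n, n', ?_⟩
  rw [← coe_zpow_apply hS', ← coe_zpow_apply hS'] at hnn' ⊢
  rw [← apply_zpow_of_mem_autGroup hφ, ← apply_zpow_of_mem_autGroup hφ]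
  exact hnn'.apply_of_mem_autGroup hX hS' hφ

lemma SSameOrbit.of_apply_of_mem_autGroup (hS' : ∀ x : X, (S' x : ℤ → A) = SShift 1 x)
    {φ : Equiv.Perm X} (hφ : φ ∈ autGroup S') {x y : X}
    (h : SSameOrbit (φ x : ℤ → A) (φ y)) : SSameOrbit (x : ℤ → A) y := by
  obtain ⟨n, hn⟩ := h
  refine ⟨n, ?_⟩
  rw [← coe_zpow_apply hS'] at hn ⊢
  rw [← apply_zpow_of_mem_autGroup hφ] at hn
  exact congrArg Subtype.val (φ.injective (Subtype.ext hn))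

lemma exists_sOrbAsymp_apply_of_existsUnique [DiscreteTopology A] (hX : IsCompact X)
    (hS' : ∀ x : X, (S' x : ℤ → A) = SShift 1 x)
    (huniq : ∃! C : Set (ℤ → A), SIsAsymComponent X C) {φ : Equiv.Perm X}
    (hφ : φ ∈ autGroup S') : ∃ x : X, SOrbAsymp (x : ℤ → A) (φ x) := by
  obtain ⟨C, ⟨x, hx, rfl, y, hy, hxy, hxy'⟩, hC⟩ := huniq
  let x' : X := ⟨x, hx⟩
  let y' : X := ⟨y, hy⟩
  have himage : SIsAsymComponent X {w ∈ X | SOrbAsymp (φ x' : ℤ → A) w} :=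
    ⟨_, (φ x').2, rfl, _, (φ y').2,
      SOrbAsymp.apply_of_mem_autGroup (x := x') (y := y') hX hS' hφ hxy,
      fun h => hxy' (h.of_apply_of_mem_autGroup hS' hφ)⟩
  have hmem : (φ x' : ℤ → A) ∈ {w ∈ X | SOrbAsymp x w} :=
    hC _ himage ▸ ⟨(φ x').2, sOrbAsymp_refl _⟩
  exact ⟨x', hmem.2⟩

lemma exists_apply_eq_of_sAsymp [T2Space A] (hX : IsCompact X)
    (hS' : ∀ x : X, (S' x : ℤ → A) = SShift 1 x) {ψ : Equiv.Perm X} (hψ : ψ ∈ autGroup S')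
    {z : X} (h : SAsymp (z : ℤ → A) (ψ z)) : ∃ w, ψ w = w := by
  have := isCompact_iff_compactSpace.mp hX
  obtain ⟨w, -, hw⟩ := isCompact_univ.exists_mapClusterPt (f := atTop)
    (u := fun k : ℕ => (S'.toEquiv ^ (-(k : ℤ))) z) (by simp)
  obtain ⟨ℓ, hℓ⟩ := h
  refine ⟨w, Subtype.ext (funext fun i => ?_)⟩
  have hcont : Continuous fun a : X => ((a : ℤ → A) i, (ψ a : ℤ → A) i) :=
    ((continuous_apply i).comp continuous_subtype_val).prodMk
      ((continuous_apply i).comp (continuous_subtype_val.comp hψ.1))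
  refine (Set.mem_diagonal_iff.mp (isClosed_diagonal.mem_of_mapClusterPt
    (hw.continuousAt_comp hcont.continuousAt) ?_)).symm
  filter_upwards [eventually_gt_atTop (i - ℓ).toNat] with k hk
  simp only [Function.comp, Set.mem_diagonal_iff, apply_zpow_of_mem_autGroup hψ,
    coe_zpow_apply hS', sShift_apply]
  exact hℓ _ (by omega)

lemma exists_eq_zpow_of_existsUnique [DiscreteTopology A] (hmin : IsMinimalSubshift X)
    (hX : IsCompact X) (hS' : ∀ x : X, (S' x : ℤ → A) = SShift 1 x)
    (huniq : ∃! C : Set (ℤ → A), SIsAsymComponent X C) {φ : Equiv.Perm X}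
    (hφ : φ ∈ autGroup S') : ∃ k : ℤ, φ = S'.toEquiv ^ k := by
  obtain ⟨x, n, n', h⟩ := exists_sOrbAsymp_apply_of_existsUnique hX hS' huniq hφ
  set σ := S'.toEquiv
  have hψ : σ ^ (n' - n) * φ ∈ autGroup S' := mul_mem (zpow_mem toEquiv_mem_autGroup _) hφ
  have hz : SAsymp ((σ ^ n) x : ℤ → A) ((σ ^ (n' - n) * φ) ((σ ^ n) x)) := by
    rwa [Equiv.Perm.mul_apply, apply_zpow_of_mem_autGroup hφ, ← Equiv.Perm.mul_apply, ← zpow_add,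
      sub_add_cancel, coe_zpow_apply hS', coe_zpow_apply hS']
  obtain ⟨w, hw⟩ := exists_apply_eq_of_sAsymp hX hS' hψ hz
  refine ⟨n - n', ?_⟩
  rw [eq_inv_of_mul_eq_one_right (eq_one_of_mem_autGroup_of_apply_eq hmin hS' hψ hw), ← zpow_neg,
    neg_sub]

lemma injective_zpow_of_infinite [T2Space A] (hmin : IsMinimalSubshift X)
    (hS' : ∀ x : X, (S' x : ℤ → A) = SShift 1 x) (hinf : X.Infinite) :
    Function.Injective fun n : ℤ => S'.toEquiv ^ n := by
  refine injective_zpow_iff_not_isOfFinOrder.mpr fun hfin => hinf ?_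
  obtain ⟨x, hx⟩ := hmin.1.1
  have horbit : (Set.range fun n : ℤ => (S'.toEquiv ^ n) ⟨x, hx⟩).Finite :=
    (hfin.finite_zpowers.image fun g => g ⟨x, hx⟩).subset <| by
      rintro _ ⟨n, rfl⟩
      exact ⟨_, ⟨n, rfl⟩, rfl⟩
  have huniv : (Set.univ : Set X).Finite := by
    rw [← (hmin.dense_range_zpow_apply hS' _).closure_eq, horbit.isClosed.closure_eq]
    exact horbit
  exact Set.finite_coe_iff.mp (Set.finite_univ_iff.mp huniv)

end Automorphisms

/-- An infinite minimal subshift with exactly one asymptotic component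
has automorphism group isomorphic to `ℤ`. -/
theorem aut_eq_int_of_unique_component
    {A : Type*} [Fintype A] [TopologicalSpace A] [DiscreteTopology A]
    (X : Set (ℤ → A)) (hmin : IsMinimalSubshift X) (hinf : X.Infinite)
    (S' : ↥X ≃ₜ ↥X) (hS' : ∀ x : ↥X, (S' x : ℤ → A) = SShift 1 (x : ℤ → A))
    (huniq : ∃! C : Set (ℤ → A), SIsAsymComponent X C) :
    Nonempty (↥(autGroup S') ≃* Multiplicative ℤ) := by
  have hX : IsCompact X := hmin.1.2.1.isCompact
  let σ : autGroup S' := ⟨S'.toEquiv, toEquiv_mem_autGroup⟩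
  refine ⟨(MulEquiv.ofBijective (zpowersHom _ σ) ⟨fun a b hab => ?_, ?_⟩).symm⟩
  · refine Multiplicative.toAdd.injective (injective_zpow_of_infinite hmin hS' hinf ?_)
    simpa [σ] using congrArg Subtype.val hab
  · rintro ⟨φ, hφ⟩
    obtain ⟨k, rfl⟩ := exists_eq_zpow_of_existsUnique hmin hX hS' huniq hφ
    exact ⟨Multiplicative.ofAdd k, rfl⟩

end AsympSOE
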